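/- arXiv:2508.02688 — 2 statements merged into one kernel-verified Lean document; each statement's English description precedes it below -/
import Mathlib

section
/- Let m, n, k be integers with m ≥ 2, 1 ≤ n ≤ k, satisfying N_m = F_n · F_k. Then |5a·α^m·γ^{−(n+k)} − 1| < 4.91 · γ^{−2n}, where α is the unique real root of X³ − X² − 1, a = α²/(α³ + 2) and γ = (1 + √5)/2. -/
/-- The Narayana's cows sequence: N 0 = 0, N 1 = N 2 = 1, N (m+3) = N (m+2) + N m. -/
def narayana : ℕ → ℕ
  | 0 => 0
  | 1 => 1
  | 2 => 1
  | m + 3 => narayana (m + 2) + narayana m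

/-!
The error `E_m = (α² + 3) (N_m - a α^m)` satisfies the linear recurrence of the two complex
roots `β, β̄` of `X³ - X² - 1`, so `α^m` times a positive definite quadratic form in
`(E_m, E_{m+1})` is constant (as `|β|² = 1/α`); for `m ≥ 2` this gives `|N_m - a α^m| ≤ 2/5`.
By Binet's formula, `5 F_n F_k γ^{-(n+k)} = (1 - u^n) (1 - u^k)` with `u = ψ/γ` and
`|u| = γ^{-2} < 0.382`, which is within `(2 + 0.382) γ^{-2n}` of `1`. The two errors add up to
at most `4.382 γ^{-2n}`. Below, `γ` is Mathlib's `φ`.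
-/

open Real goldenRatio

section NarayanaError

variable {α : ℝ}

theorem seven_fifths_lt_of_root (hα : α ^ 3 - α ^ 2 - 1 = 0) : 7 / 5 < α := by
  by_contra! h
  rcases le_or_gt α 1 with h1 | h1
  · nlinarith [sq_nonneg α]
  · nlinarith [mul_le_mul (by nlinarith : α ^ 2 ≤ 49 / 25) (by linarith : α - 1 ≤ 2 / 5)
      (by linarith) (by norm_num)]

/-- `(α² + 3) (N_m - a α^m)`, as `a = α² / (α³ + 2) = α² / (α² + 3)`. -/
noncomputable def narayanaError (α : ℝ) (m : ℕ) : ℝ := (α ^ 2 + 3) * narayana m - α ^ (m + 2)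

theorem narayanaError_add_three (hα : α ^ 3 - α ^ 2 - 1 = 0) (m : ℕ) :
    narayanaError α (m + 3) = narayanaError α (m + 2) + narayanaError α m := by
  simp only [narayanaError, narayana]
  push_cast
  linear_combination (-α ^ (m + 2)) * hα

/-- `α X² + (α² - α) X + 1` is `α` times the cofactor of `X - α` in `X³ - X² - 1`: the error
only involves the powers of the two complex roots. -/
theorem narayanaError_conj_rec (hα : α ^ 3 - α ^ 2 - 1 = 0) (m : ℕ) :
    α * narayanaError α (m + 2) + (α ^ 2 - α) * narayanaError α (m + 1)
      + narayanaError α m = 0 := by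
  induction m with
  | zero =>
    simp only [narayanaError, narayana]
    push_cast
    linear_combination (-2 * α ^ 2) * hα
  | succ m ih =>
    linear_combination
      α * narayanaError_add_three hα m + α * ih - narayanaError α (m + 1) * hα

/-- `E_m = c β^m + c̄ β̄^m` for a complex root `β`, and the form is a constant times
`|β|^(2m) = α^(-m)`. -/
theorem narayanaError_invariant (hα : α ^ 3 - α ^ 2 - 1 = 0) (m : ℕ) :
    α ^ m * (α * narayanaError α (m + 1) ^ 2
      + (α ^ 2 - α) * narayanaError α m * narayanaError α (m + 1) + narayanaError α m ^ 2)
      = (α ^ 2 + 3) * α := by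
  induction m with
  | zero =>
    simp only [narayanaError, narayana]
    push_cast
    linear_combination (2 * α ^ 4 - 2 * α ^ 3 - 6 * α) * hα
  | succ m ih =>
    linear_combination ih + (α ^ m * (α * narayanaError α (m + 2) - narayanaError α m))
      * narayanaError_conj_rec hα m

theorem sq_narayanaError_le (hα : α ^ 3 - α ^ 2 - 1 = 0) {m : ℕ} (hm : 2 ≤ m) :
    (3 * α + 1) * narayanaError α m ^ 2 ≤ 4 * (α ^ 2 + 3) := by
  have hα₁ : 1 ≤ α := by linarith [seven_fifths_lt_of_root hα]
  set E := narayanaError α m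
  -- complete the square in the invariant form, using `α² (α - 1)² = α - 1`
  have hsquare : (3 * α + 1) * (α ^ m * E ^ 2) = 4 * (α ^ 2 + 3) * α ^ 2
      - α ^ m * (2 * α * narayanaError α (m + 1) + (α ^ 2 - α) * E) ^ 2 := by
    linear_combination 4 * α * narayanaError_invariant hα m + (α ^ m * E ^ 2) * (α - 1) * hα
  have hpow : α ^ 2 ≤ α ^ m := pow_le_pow_right₀ hα₁ hm
  have hrest : 0 ≤ α ^ m * (2 * α * narayanaError α (m + 1) + (α ^ 2 - α) * E) ^ 2 := by
    positivity
  have : α ^ 2 * ((3 * α + 1) * E ^ 2) ≤ α ^ 2 * (4 * (α ^ 2 + 3)) := by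
    linear_combination
      mul_le_mul_of_nonneg_right hpow (by positivity : 0 ≤ (3 * α + 1) * E ^ 2) + hsquare + hrest
  exact le_of_mul_le_mul_left this (by positivity)

theorem abs_narayana_sub_le (hα : α ^ 3 - α ^ 2 - 1 = 0) {m : ℕ} (hm : 2 ≤ m) :
    |(narayana m : ℝ) - α ^ 2 / (α ^ 3 + 2) * α ^ m| ≤ 2 / 5 := by
  have hd : 0 < α ^ 2 + 3 := by positivity
  have heq : (narayana m : ℝ) - α ^ 2 / (α ^ 3 + 2) * α ^ m
      = narayanaError α m / (α ^ 2 + 3) := by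
    rw [show α ^ 3 + 2 = α ^ 2 + 3 by linarith, narayanaError]
    field_simp
    ring
  rw [heq, abs_div, abs_of_pos hd, div_le_iff₀ hd]
  refine abs_le_of_sq_le_sq ?_ (by positivity)
  have hE := sq_narayanaError_le hα hm
  have : 25 ≤ (3 * α + 1) * (α ^ 2 + 3) := by nlinarith [seven_fifths_lt_of_root hα]
  nlinarith

end NarayanaError

theorem abs_one_sub_mul_one_sub_sub_one_le {u : ℝ} (hu : |u| ≤ 1) {n k : ℕ}
    (hn : 1 ≤ n) (hnk : n ≤ k) :
    |(1 - u ^ n) * (1 - u ^ k) - 1| ≤ (2 + |u|) * |u| ^ n := by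
  have hk : |u| ^ k ≤ |u| ^ n := pow_le_pow_of_le_one (abs_nonneg u) hu hnk
  have hk₁ : |u| ^ k ≤ |u| := by
    simpa using pow_le_pow_of_le_one (abs_nonneg u) hu (hn.trans hnk)
  calc |(1 - u ^ n) * (1 - u ^ k) - 1| = |-u ^ n - u ^ k + u ^ n * u ^ k| := by ring_nf
    _ ≤ |u| ^ n + |u| ^ k + |u| ^ n * |u| ^ k := by
      grw [abs_add_le, abs_sub, abs_neg, abs_mul, abs_pow, abs_pow]
    _ ≤ (2 + |u|) * |u| ^ n := by nlinarith [pow_nonneg (abs_nonneg u) n]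

theorem five_mul_fib_mul_fib (n k : ℕ) :
    5 * ((Nat.fib n : ℝ) * Nat.fib k) = (φ ^ n - ψ ^ n) * (φ ^ k - ψ ^ k) := by
  rw [coe_fib_eq, coe_fib_eq, div_mul_div_comm, ← sq, sq_sqrt (by norm_num)]
  field_simp

theorem abs_goldenConj_div_goldenRatio : |ψ / φ| = φ ^ (-2 : ℤ) := by
  rw [← neg_neg ψ, ← inv_goldenRatio, neg_div, abs_neg, abs_div, abs_inv,
    abs_of_pos goldenRatio_pos]
  simp [zpow_neg, div_eq_mul_inv, sq]

theorem goldenRatio_zpow_neg_two_lt : φ ^ (-2 : ℤ) < 0.382 := by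
  have h5 : (2.236 : ℝ) < √5 := by
    rw [lt_sqrt (by norm_num)]; norm_num
  rw [zpow_neg, zpow_ofNat, goldenRatio_sq,
    inv_lt_comm₀ (by linarith [goldenRatio_pos]) (by norm_num)]
  norm_num [goldenRatio]
  linarith

theorem pow_sub_pow_mul_pow_sub_pow_mul_zpow {x : ℝ} (hx : x ≠ 0) (y : ℝ) (n k : ℕ) :
    (x ^ n - y ^ n) * (x ^ k - y ^ k) * x ^ (-((n : ℤ) + k))
      = (1 - (y / x) ^ n) * (1 - (y / x) ^ k) := by
  rw [neg_add, zpow_add₀ hx, zpow_neg, zpow_neg, zpow_natCast, zpow_natCast,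
    div_pow, div_pow]
  field_simp

theorem abs_five_mul_fib_mul_fib_mul_zpow_sub_one_le {n k : ℕ} (hn : 1 ≤ n) (hnk : n ≤ k) :
    |5 * ((Nat.fib n : ℝ) * Nat.fib k) * φ ^ (-((n : ℤ) + k)) - 1|
      ≤ (2 + φ ^ (-2 : ℤ)) * φ ^ (-(2 * (n : ℤ))) := by
  have hu : |ψ / φ| ≤ 1 := by
    rw [abs_goldenConj_div_goldenRatio]
    exact zpow_le_one_of_nonpos₀ one_lt_goldenRatio.le (by norm_num)
  rw [five_mul_fib_mul_fib, pow_sub_pow_mul_pow_sub_pow_mul_zpow goldenRatio_ne_zero,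
    show -(2 * (n : ℤ)) = -2 * n by ring, zpow_mul, zpow_natCast,
    ← abs_goldenConj_div_goldenRatio]
  exact abs_one_sub_mul_one_sub_sub_one_le hu hn hnk

theorem linear_form_one_bound (α : ℝ) (hα : α ^ 3 - α ^ 2 - 1 = 0)
    (m n k : ℕ) (hm : 2 ≤ m) (hn : 1 ≤ n) (hnk : n ≤ k)
    (h : narayana m = Nat.fib n * Nat.fib k) :
    |5 * (α ^ 2 / (α ^ 3 + 2)) * α ^ m * ((1 + Real.sqrt 5) / 2) ^ (-((n : ℤ) + k)) - 1|
      < 4.91 * ((1 + Real.sqrt 5) / 2) ^ (-(2 * (n : ℤ))) := by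
  change |5 * (α ^ 2 / (α ^ 3 + 2)) * α ^ m * φ ^ (-((n : ℤ) + k)) - 1|
    < 4.91 * φ ^ (-(2 * (n : ℤ)))
  set P := φ ^ (-((n : ℤ) + k))
  set Q := φ ^ (-(2 * (n : ℤ)))
  have hP : 0 ≤ P := by positivity
  have hPQ : P ≤ Q := zpow_le_zpow_right₀ one_lt_goldenRatio.le (by omega)
  have hQ : 0 < Q := by positivity
  have hsplit : 5 * (α ^ 2 / (α ^ 3 + 2)) * α ^ m * P - 1
      = (5 * ((Nat.fib n : ℝ) * Nat.fib k) * P - 1)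
        - 5 * ((narayana m : ℝ) - α ^ 2 / (α ^ 3 + 2) * α ^ m) * P := by
    rw [h]; push_cast; ring
  have hfib := abs_five_mul_fib_mul_fib_mul_zpow_sub_one_le hn hnk
  have hnar : |5 * ((narayana m : ℝ) - α ^ 2 / (α ^ 3 + 2) * α ^ m) * P| ≤ 2 * Q := by
    rw [abs_mul, abs_mul, abs_of_nonneg hP, abs_of_pos (by norm_num : (0 : ℝ) < 5)]
    calc _ ≤ 5 * (2 / 5) * Q := by gcongr; exact abs_narayana_sub_le hα hm
      _ = 2 * Q := by norm_num
  calc _ ≤ _ := hsplit ▸ abs_sub _ _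
    _ ≤ (2 + φ ^ (-2 : ℤ)) * Q + 2 * Q := add_le_add hfib hnar
    _ < 4.91 * Q := by nlinarith [mul_lt_mul_of_pos_right goldenRatio_zpow_neg_two_lt hQ]
end

section
/- The numbers α and γ are multiplicatively independent: there exist no positive integers p and q with α^q = γ^p. Consequently, the real number (log α)/(log γ) is irrational. Here α is the unique real root of X³ − X² − 1 and γ = (1 + √5)/2. -/
/-!
If `α ^ q = γ ^ p` with `p > 0`, then `γ ^ p` lies in the cubic field `ℚ(α)`. Since
`γ ^ p = F_p γ + F_{p-1}` with Fibonacci numbers `F_p ≠ 0`, also `γ` lies in `ℚ(α)`. But `γ` is a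
root of `X ^ 2 - X - 1`, so its degree over `ℚ` is at most `2` and divides `[ℚ(α) : ℚ] = 3`;
hence `γ` would be rational. Irrationality of `log α / log γ` is the same statement in logarithmic
form: `log α / log γ = p / q` means `α ^ q = γ ^ p`.
-/

open Polynomial Module IntermediateField Real goldenRatio

theorem mem_range_algebraMap_of_aeval_eq_zero_of_odd_finrank {F E : Type*} [Field F] [Field E]
    [Algebra F E] [FiniteDimensional F E] (hodd : Odd (finrank F E)) {p : F[X]} (hp : p ≠ 0)
    (hdeg : p.natDegree ≤ 2) {x : E} (hx : aeval x p = 0) : x ∈ (algebraMap F E).range := by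
  have hle : (minpoly F x).natDegree ≤ 2 :=
    (natDegree_le_of_dvd (minpoly.dvd F x hx) hp).trans hdeg
  have hodd' : Odd (minpoly F x).natDegree := hodd.of_dvd_nat (minpoly.degree_dvd (.of_finite F x))
  have hpos := minpoly.natDegree_pos (IsIntegral.of_finite F x)
  rw [← minpoly.natDegree_eq_one_iff]
  interval_cases (minpoly F x).natDegree
  · rfl
  · exact absurd hodd' (by decide)

theorem Real.goldenRatio_mem_of_pow_mem {K : Subfield ℝ} {n : ℕ} (hn : n ≠ 0) (h : φ ^ n ∈ K) :
    φ ∈ K := by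
  obtain ⟨m, rfl⟩ := Nat.exists_eq_succ_of_ne_zero hn
  have hfib : (Nat.fib (m + 1) : ℝ) ≠ 0 := by exact_mod_cast (Nat.fib_pos.mpr m.succ_pos).ne'
  have hφ : φ = (φ ^ (m + 1) - Nat.fib m) / Nat.fib (m + 1) := by
    rw [eq_div_iff hfib, ← goldenRatio_mul_fib_succ_add_fib]; ring
  rw [hφ]
  exact K.div_mem (K.sub_mem h (natCast_mem K _)) (natCast_mem K _)

theorem irreducible_X_pow_three_sub_X_sq_sub_one : Irreducible (X ^ 3 - X ^ 2 - 1 : ℚ[X]) := by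
  refine irreducible_of_degree_le_three_of_not_isRoot ?_ fun r hr ↦ ?_
  · have : (X ^ 3 - X ^ 2 - 1 : ℚ[X]).natDegree = 3 := by compute_degree!
    simp [this]
  have : aeval r (X ^ 3 - X ^ 2 - 1 : ℤ[X]) = 0 := by simpa using hr
  obtain ⟨n, rfl⟩ := isInteger_of_is_root_of_monic (by monicity!) this
  have hn : n ^ 2 * (n - 1) = 1 := by
    have : (n : ℚ) ^ 2 * (n - 1) = 1 := by
      simp only [algebraMap_int_eq, eq_intCast, IsRoot.def, eval_sub, eval_pow, eval_X, eval_one] at hr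
      linear_combination hr
    exact_mod_cast this
  have hsq : n ^ 2 ≤ 1 := Int.le_of_dvd one_pos ⟨n - 1, hn.symm⟩
  have hlo : -1 ≤ n := by nlinarith
  have hhi : n ≤ 1 := by nlinarith
  interval_cases n <;> norm_num at hn

theorem finrank_adjoin_eq_three_of_cubic {L : Type*} [Field L] [CharZero L] {α : L}
    (hα : α ^ 3 - α ^ 2 - 1 = 0) : finrank ℚ ℚ⟮α⟯ = 3 := by
  have hroot : aeval α (X ^ 3 - X ^ 2 - 1 : ℚ[X]) = 0 := by simpa using hα
  have hmonic : (X ^ 3 - X ^ 2 - 1 : ℚ[X]).Monic := by monicity!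
  rw [adjoin.finrank ⟨_, hmonic, hroot⟩,
    ← minpoly.eq_of_irreducible_of_monic irreducible_X_pow_three_sub_X_sq_sub_one hroot hmonic]
  compute_degree!

theorem pow_ne_goldenRatio_pow_of_cubic {α : ℝ} (hα : α ^ 3 - α ^ 2 - 1 = 0) {p : ℕ} (hp : p ≠ 0)
    (q : ℕ) : α ^ q ≠ φ ^ p := by
  intro h
  have hφ : φ ∈ ℚ⟮α⟯ := by
    refine goldenRatio_mem_of_pow_mem (K := ℚ⟮α⟯.toSubfield) hp ?_
    rw [← h]
    exact pow_mem (mem_adjoin_simple_self ℚ α) q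
  have hfin := finrank_adjoin_eq_three_of_cubic hα
  have := Module.finite_of_finrank_eq_succ hfin
  have hquad : aeval (⟨φ, hφ⟩ : ℚ⟮α⟯) (X ^ 2 - X - 1 : ℚ[X]) = 0 := by
    ext
    simp [goldenRatio_sq]
  obtain ⟨r, hr⟩ := mem_range_algebraMap_of_aeval_eq_zero_of_odd_finrank (by rw [hfin]; decide)
    (Monic.ne_zero (by monicity!)) (by compute_degree!) hquad
  exact goldenRatio_irrational ⟨r, congrArg Subtype.val hr⟩

theorem irrational_log_div_log_of_pow_ne_pow {a b : ℝ} (ha : 1 < a) (hb : 1 < b)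
    (h : ∀ p q : ℕ, 0 < p → 0 < q → a ^ q ≠ b ^ p) : Irrational (log a / log b) := by
  rintro ⟨r, hr⟩
  have hnum : 0 < r.num := by
    have : (0 : ℝ) < r := hr ▸ div_pos (log_pos ha) (log_pos hb)
    exact Rat.num_pos.mpr (mod_cast this)
  have hnum' : (r.num.toNat : ℝ) = r.num := mod_cast Int.toNat_of_nonneg hnum.le
  have hlog : r.den * log a = r.num * log b := by
    rw [Rat.cast_def, div_eq_div_iff (by positivity) (log_pos hb).ne'] at hr
    linarith
  refine h r.num.toNat r.den (by omega) r.den_pos (log_injOn_pos ?_ ?_ ?_)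
  · exact pow_pos (by linarith : (0 : ℝ) < a) _
  · exact pow_pos (by linarith : (0 : ℝ) < b) _
  · rw [log_pow, log_pow, hnum', hlog]

theorem alpha_gamma_mult_indep (α : ℝ) (hα : α ^ 3 - α ^ 2 - 1 = 0) :
    (∀ p q : ℕ, 0 < p → 0 < q → α ^ q ≠ ((1 + Real.sqrt 5) / 2) ^ p) ∧
    Irrational (Real.log α / Real.log ((1 + Real.sqrt 5) / 2)) := by
  have hα1 : 1 < α := by nlinarith [sq_nonneg α]
  have hindep : ∀ p q : ℕ, 0 < p → 0 < q → α ^ q ≠ φ ^ p :=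
    fun p q hp _ ↦ pow_ne_goldenRatio_pow_of_cubic hα hp.ne' q
  exact ⟨hindep, irrational_log_div_log_of_pow_ne_pow hα1 one_lt_goldenRatio hindep⟩
end
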